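/- arXiv:2110.12499 — 7 statements merged into one kernel-verified Lean document; each statement's English description precedes it below -/
import Mathlib

section
/- Let f be monotone, nonnegative and submodular on a finite set C with multilinear extension F. Then for every x ∈ [0,1]^C and every nonnegative direction d ∈ ℝ_{≥0}^C, the function λ ↦ F(x + λ d) (defined for λ keeping x + λd in [0,1]^C) is concave in λ. -/
/-!
Along the line `l ↦ x + l • d` the multilinear extension `F` of `f` is a polynomial whose
derivative is `∑ⱼ dⱼ ∂ⱼF`, and `∂ⱼF` is itself the multilinear extension of the discrete
derivative `Δⱼ f T = f (T ∪ {j}) - f (T \ {j})`. Hence the second derivative is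
`∑ᵢ ∑ⱼ dᵢ dⱼ F[Δᵢ Δⱼ f]`. Now `Δⱼ Δⱼ f = 0`, and for `i ≠ j` submodularity says exactly that
`Δᵢ Δⱼ f ≤ 0`; since the weights of a point of the cube are nonnegative, every `F[Δᵢ Δⱼ f]` is
nonpositive there, and so is the second derivative when `d ≥ 0`.
-/

open Finset

/-- The multilinear extension of a set function. -/
noncomputable def multilinearExt {C : Type*} [Fintype C] [DecidableEq C]
    (f : Finset C → ℝ) (x : C → ℝ) : ℝ :=
  ∑ T ∈ (Finset.univ : Finset C).powerset,
    f T * ((∏ j ∈ T, x j) * ∏ j ∈ Tᶜ, (1 - x j))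

theorem Finset.sum_powerset_univ_eq_sum_powerset_erase {C M : Type*} [Fintype C] [DecidableEq C]
    [AddCommMonoid M] (j : C) (h : Finset C → M) :
    ∑ T ∈ univ.powerset, h T = ∑ T ∈ (univ.erase j).powerset, (h T + h (insert j T)) := by
  rw [sum_add_distrib, ← sum_powerset_insert (notMem_erase j univ), insert_erase (mem_univ j)]

section

variable {C : Type*} [DecidableEq C]

def discreteDeriv (j : C) (f : Finset C → ℝ) (T : Finset C) : ℝ :=
  f (insert j T) - f (T.erase j)

theorem discreteDeriv_discreteDeriv_nonpos (f : Finset C → ℝ)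
    (hsub : ∀ (S T : Finset C) (t : C), S ⊆ T → t ∉ T →
      f (S ∪ {t}) - f S ≥ f (T ∪ {t}) - f T)
    (i j : C) (T : Finset C) :
    discreteDeriv i (discreteDeriv j f) T ≤ 0 := by
  unfold discreteDeriv
  rcases eq_or_ne i j with rfl | hij
  · have hins : insert i (T.erase i) = insert i T := by ext k; by_cases k = i <;> simp [*]
    simp [hins, erase_insert_eq_erase]
  set S := (T.erase i).erase j
  have hjS : j ∉ insert i S := by simp [S, hij.symm]
  have h1 : insert j (insert i T) = insert i S ∪ {j} := by ext k; simp [S]; grind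
  have h2 : (insert i T).erase j = insert i S := by ext k; simp [S]; grind
  have h3 : insert j (T.erase i) = S ∪ {j} := by ext k; simp [S]; grind
  have := hsub S (insert i S) j (subset_insert i S) hjS
  rw [h1, h2, h3]
  linarith

variable [Fintype C]

theorem multilinearExt_eq_sum_prod_ite (f : Finset C → ℝ) (y : C → ℝ) :
    multilinearExt f y =
      ∑ T ∈ univ.powerset, f T * ∏ i, if i ∈ T then y i else 1 - y i := by
  simp only [multilinearExt, prod_ite, filter_mem_eq_inter, univ_inter, filter_not,
    compl_eq_univ_sdiff]

/-- The right-hand side is `∂ⱼ` of the multilinear extension of `f` at `y`. -/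
theorem multilinearExt_discreteDeriv (f : Finset C → ℝ) (y : C → ℝ) (j : C) :
    multilinearExt (discreteDeriv j f) y =
      ∑ T ∈ univ.powerset, f T * ((if j ∈ T then 1 else -1) *
        ∏ i ∈ univ.erase j, if i ∈ T then y i else 1 - y i) := by
  rw [multilinearExt_eq_sum_prod_ite, sum_powerset_univ_eq_sum_powerset_erase j,
    sum_powerset_univ_eq_sum_powerset_erase j]
  refine sum_congr rfl fun T hT => ?_
  have hjT : j ∉ T := fun h => notMem_erase j univ (mem_powerset.mp hT h)
  have hprod : ∀ S : Finset C, ∏ i, (if i ∈ S then y i else 1 - y i) =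
      (if j ∈ S then y j else 1 - y j) * ∏ i ∈ univ.erase j, if i ∈ S then y i else 1 - y i :=
    fun S => (mul_prod_erase univ _ (mem_univ j)).symm
  have herase : ∏ i ∈ univ.erase j, (if i ∈ insert j T then y i else 1 - y i) =
      ∏ i ∈ univ.erase j, if i ∈ T then y i else 1 - y i :=
    prod_congr rfl fun i hi => by simp [ne_of_mem_erase hi]
  simp only [discreteDeriv, hprod, herase, insert_idem, erase_insert hjT, erase_eq_of_notMem hjT,
    mem_insert_self, hjT, if_true, if_false]
  ring

theorem hasDerivAt_multilinearExt_line (f : Finset C → ℝ) (x d : C → ℝ) (l : ℝ) :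
    HasDerivAt (fun l => multilinearExt f (fun i => x i + l * d i))
      (∑ j, d j * multilinearExt (discreteDeriv j f) (fun i => x i + l * d i)) l := by
  have hfactor : ∀ (T : Finset C) (i : C), HasDerivAt
      (fun l => if i ∈ T then x i + l * d i else 1 - (x i + l * d i))
      ((if i ∈ T then 1 else -1) * d i) l := by
    intro T i
    split_ifs
    · simpa using (hasDerivAt_mul_const (d i)).const_add (x i)
    · simpa using ((hasDerivAt_mul_const (d i)).const_add (x i)).const_sub 1
  simp only [multilinearExt_discreteDeriv]
  simp only [multilinearExt_eq_sum_prod_ite]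
  refine (HasDerivAt.fun_sum fun T _ =>
    (HasDerivAt.fun_finsetProd fun i _ => hfactor T i).const_mul (f T)).congr_deriv ?_
  simp only [mul_sum, smul_eq_mul]
  rw [sum_comm]
  exact sum_congr rfl fun T _ => sum_congr rfl fun j _ => by ring

theorem multilinearExt_nonpos {g : Finset C → ℝ} (hg : ∀ T, g T ≤ 0) {y : C → ℝ}
    (hy : ∀ j, y j ∈ Set.Icc (0 : ℝ) 1) : multilinearExt g y ≤ 0 :=
  sum_nonpos fun T _ => mul_nonpos_of_nonpos_of_nonneg (hg T) <|
    mul_nonneg (prod_nonneg fun j _ => (hy j).1) (prod_nonneg fun j _ => sub_nonneg.2 (hy j).2)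

end

theorem multilinearExt_concave_positive_directions_general {C : Type*} [Fintype C] [DecidableEq C]
    (f : Finset C → ℝ)
    (hsub : ∀ (S T : Finset C) (t : C), S ⊆ T → t ∉ T →
      f (S ∪ {t}) - f S ≥ f (T ∪ {t}) - f T)
    (x : C → ℝ)
    (d : C → ℝ) (hd : ∀ j, 0 ≤ d j) :
    ConcaveOn ℝ {l : ℝ | ∀ j, x j + l * d j ∈ Set.Icc (0:ℝ) 1}
      (fun l => multilinearExt f (fun j => x j + l * d j)) := by
  have hconvex : Convex ℝ {l : ℝ | ∀ j, x j + l * d j ∈ Set.Icc (0:ℝ) 1} := by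
    intro a ha b hb s t hs ht hst j
    convert convex_Icc (0:ℝ) 1 (ha j) (hb j) hs ht hst using 1
    simp only [smul_eq_mul]
    linear_combination (x j) * hst.symm
  have hderiv := hasDerivAt_multilinearExt_line f x d
  have hderiv2 (l : ℝ) := HasDerivAt.fun_sum fun j (_ : j ∈ univ) =>
    (hasDerivAt_multilinearExt_line (discreteDeriv j f) x d l).const_mul (d j)
  refine concaveOn_of_hasDerivWithinAt2_nonpos hconvex
    (fun l _ => (hderiv l).continuousAt.continuousWithinAt)
    (fun l _ => (hderiv l).hasDerivWithinAt) (fun l _ => (hderiv2 l).hasDerivWithinAt)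
    fun l hl => sum_nonpos fun j _ => mul_nonpos_of_nonneg_of_nonpos (hd j) <|
      sum_nonpos fun i _ => mul_nonpos_of_nonneg_of_nonpos (hd i) <|
        multilinearExt_nonpos (discreteDeriv_discreteDeriv_nonpos f hsub i j) (interior_subset hl)

/-- Concavity of the multilinear extension of a monotone, nonnegative, submodular
function along nonnegative directions. -/
theorem multilinearExt_concave_positive_directions {C : Type*} [Fintype C] [DecidableEq C]
    (f : Finset C → ℝ)
    (hmono : ∀ S T : Finset C, S ⊆ T → f S ≤ f T)
    (hnonneg : ∀ S : Finset C, 0 ≤ f S)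
    (hsub : ∀ (S T : Finset C) (t : C), S ⊆ T → t ∉ T →
      f (S ∪ {t}) - f S ≥ f (T ∪ {t}) - f T)
    (x : C → ℝ) (hx : ∀ j, x j ∈ Set.Icc (0:ℝ) 1)
    (d : C → ℝ) (hd : ∀ j, 0 ≤ d j) :
    ConcaveOn ℝ {l : ℝ | ∀ j, x j + l * d j ∈ Set.Icc (0:ℝ) 1}
      (fun l => multilinearExt f (fun j => x j + l * d j)) :=
  multilinearExt_concave_positive_directions_general f hsub x d hd
end

section
/- Let f be monotone, nonnegative, submodular on finite C with multilinear extension F, where f(∅)=0. Then for every x ∈ [0,1]^C, Σ_{j∈C} x_j · (∂F/∂x_j)(x) ≤ F(x). -/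
open Finset

/-- Key combinatorial lemma: sum of marginal losses is at most `f R`. -/
lemma sum_marginals_le {C : Type*} [DecidableEq C]
    (f : Finset C → ℝ)
    (hnonneg : ∀ S : Finset C, 0 ≤ f S)
    (hsub : ∀ (S T : Finset C) (t : C), S ⊆ T → t ∉ T →
      f (S ∪ {t}) - f S ≥ f (T ∪ {t}) - f T)
    (R : Finset C) :
    ∑ j ∈ R, (f R - f (R.erase j)) ≤ f R := by
  induction R using Finset.induction_on with
  | empty => simpa using hnonneg ∅
  | @insert a R' ha ih =>
    rw [Finset.sum_insert ha]
    have h1 : ∀ j ∈ R', f (insert a R') - f ((insert a R').erase j)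
        ≤ f R' - f (R'.erase j) := by
      intro j hj
      have hja : j ≠ a := by rintro rfl; exact ha hj
      have h := hsub (R'.erase j) ((insert a R').erase j) j
        (Finset.erase_subset_erase j (Finset.subset_insert a R'))
        (Finset.notMem_erase j _)
      have hus : ∀ (s : Finset C) (u : C), s ∪ {u} = insert u s := fun s u => by
        ext; simp [or_comm]
      rw [hus, hus, Finset.insert_erase hj,
        Finset.insert_erase (Finset.mem_insert_of_mem hj)] at h
      linarith
    have h2 : ∑ j ∈ R', (f (insert a R') - f ((insert a R').erase j)) ≤ f R' :=
      le_trans (Finset.sum_le_sum h1) ih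
    have : (insert a R').erase a = R' := Finset.erase_insert ha
    rw [this]
    linarith

/-- For a monotone, nonnegative, submodular `f` with `f ∅ = 0`,
`∑_j x_j ∂F/∂x_j(x) ≤ F(x)` on `[0,1]^C`. -/
theorem multilinearExt_grad_inner_le {C : Type*} [Fintype C] [DecidableEq C]
    (f : Finset C → ℝ)
    (hmono : ∀ S T : Finset C, S ⊆ T → f S ≤ f T)
    (hnonneg : ∀ S : Finset C, 0 ≤ f S)
    (hsub : ∀ (S T : Finset C) (t : C), S ⊆ T → t ∉ T →
      f (S ∪ {t}) - f S ≥ f (T ∪ {t}) - f T)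
    (hempty : f ∅ = 0)
    (x : C → ℝ) (hx : ∀ j, x j ∈ Set.Icc (0:ℝ) 1) :
    ∑ j, x j * deriv (fun t => multilinearExt f (Function.update x j t)) (x j)
      ≤ multilinearExt f x := by
  classical
  -- weight of a set
  set w : Finset C → ℝ := fun R => (∏ i ∈ R, x i) * ∏ i ∈ Rᶜ, (1 - x i) with hw
  have hwnonneg : ∀ R, 0 ≤ w R := by
    intro R
    apply mul_nonneg
    · exact Finset.prod_nonneg (fun i _ => (hx i).1)
    · exact Finset.prod_nonneg (fun i _ => by linarith [(hx i).2])
  -- coefficients of the affine-in-t expansion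
  have key : ∀ j : C,
      ∃ A B : ℝ,
        (∀ t : ℝ, multilinearExt f (Function.update x j t) = A + t * B) ∧
        x j * B = ∑ S ∈ ((Finset.univ : Finset C).erase j).powerset,
          (f (insert j S) - f S) * w (insert j S) := by
    intro j
    set a : Finset C → ℝ := fun T =>
      if j ∈ T then 0
      else f T * ((∏ i ∈ T, x i) * ∏ i ∈ Tᶜ.erase j, (1 - x i)) with ha
    set b : Finset C → ℝ := fun T =>
      if j ∈ T then f T * ((∏ i ∈ T.erase j, x i) * ∏ i ∈ Tᶜ, (1 - x i))
      else -(f T * ((∏ i ∈ T, x i) * ∏ i ∈ Tᶜ.erase j, (1 - x i))) with hb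
    refine ⟨∑ T ∈ (Finset.univ : Finset C).powerset, a T,
            ∑ T ∈ (Finset.univ : Finset C).powerset, b T, ?_, ?_⟩
    · intro t
      have hterm : ∀ T ∈ (Finset.univ : Finset C).powerset,
          f T * ((∏ i ∈ T, Function.update x j t i) *
            ∏ i ∈ Tᶜ, (1 - Function.update x j t i)) = a T + t * b T := by
        intro T _
        by_cases hj : j ∈ T
        · have h1 : (∏ i ∈ T, Function.update x j t i)
              = t * ∏ i ∈ T.erase j, x i := by
            rw [← Finset.mul_prod_erase T _ hj, Function.update_self]
            congr 1
            exact Finset.prod_congr rfl (fun i hi =>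
              Function.update_of_ne (Finset.ne_of_mem_erase hi) _ _)
          have h2 : (∏ i ∈ Tᶜ, (1 - Function.update x j t i))
              = ∏ i ∈ Tᶜ, (1 - x i) := by
            refine Finset.prod_congr rfl (fun i hi => ?_)
            have : i ≠ j := by
              rintro rfl; exact (Finset.mem_compl.mp hi) hj
            rw [Function.update_of_ne this]
          rw [h1, h2, ha, hb]
          simp only [hj, if_pos]
          ring
        · have hjc : j ∈ Tᶜ := Finset.mem_compl.mpr hj
          have h1 : (∏ i ∈ T, Function.update x j t i) = ∏ i ∈ T, x i := by
            refine Finset.prod_congr rfl (fun i hi => ?_)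
            have : i ≠ j := by rintro rfl; exact hj hi
            rw [Function.update_of_ne this]
          have h2 : (∏ i ∈ Tᶜ, (1 - Function.update x j t i))
              = (1 - t) * ∏ i ∈ Tᶜ.erase j, (1 - x i) := by
            rw [← Finset.mul_prod_erase Tᶜ _ hjc, Function.update_self]
            congr 1
            exact Finset.prod_congr rfl (fun i hi => by
              rw [Function.update_of_ne (Finset.ne_of_mem_erase hi)])
          rw [h1, h2, ha, hb]
          simp only [hj, if_neg, if_false]
          ring
      rw [multilinearExt, Finset.sum_congr rfl hterm, Finset.sum_add_distrib,
        Finset.mul_sum]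
    · -- compute x j * B
      have husplit : (Finset.univ : Finset C)
          = insert j ((Finset.univ : Finset C).erase j) :=
        (Finset.insert_erase (Finset.mem_univ j)).symm
      have hnotj : j ∉ (Finset.univ : Finset C).erase j := Finset.notMem_erase _ _
      rw [husplit, Finset.sum_powerset_insert hnotj, Finset.erase_insert hnotj]
      have hSc : ∀ S ∈ ((Finset.univ : Finset C).erase j).powerset, j ∉ S := by
        intro S hS
        exact fun h => hnotj (Finset.mem_powerset.mp hS h)
      have e1 : ∀ S ∈ ((Finset.univ : Finset C).erase j).powerset,
          b S = -(f S * ((∏ i ∈ S, x i) * ∏ i ∈ Sᶜ.erase j, (1 - x i))) := by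
        intro S hS
        rw [hb]; simp only [hSc S hS, if_neg, if_false]
      have e2 : ∀ S ∈ ((Finset.univ : Finset C).erase j).powerset,
          b (insert j S)
            = f (insert j S) * ((∏ i ∈ S, x i) * ∏ i ∈ Sᶜ.erase j, (1 - x i)) := by
        intro S hS
        have hjS := hSc S hS
        rw [hb]
        simp only [Finset.mem_insert_self, if_pos]
        rw [Finset.erase_insert hjS, Finset.compl_insert]
      have e3 : ∀ S ∈ ((Finset.univ : Finset C).erase j).powerset,
          w (insert j S) = x j * ((∏ i ∈ S, x i) * ∏ i ∈ Sᶜ.erase j, (1 - x i)) := by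
        intro S hS
        have hjS := hSc S hS
        rw [hw]
        simp only
        rw [Finset.prod_insert hjS, Finset.compl_insert]
        ring
      rw [Finset.sum_congr rfl e1, Finset.sum_congr rfl e2,
        ← Finset.sum_add_distrib, Finset.mul_sum]
      refine Finset.sum_congr rfl (fun S hS => ?_)
      rw [e3 S hS]
      ring
  -- rewrite each summand using `key`
  have hterm : ∀ j : C,
      x j * deriv (fun t => multilinearExt f (Function.update x j t)) (x j)
        = ∑ S ∈ ((Finset.univ : Finset C).erase j).powerset,
            (f (insert j S) - f S) * w (insert j S) := by
    intro j
    obtain ⟨A, B, h1, h2⟩ := key j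
    have hfun : (fun t => multilinearExt f (Function.update x j t))
        = fun t => A + t * B := funext h1
    have hd : deriv (fun t => multilinearExt f (Function.update x j t)) (x j) = B := by
      rw [hfun]
      have : HasDerivAt (fun t : ℝ => A + t * B) B (x j) := by
        simpa using ((hasDerivAt_id (x j)).mul_const B).const_add A
      exact this.deriv
    rw [hd, h2]
  rw [Finset.sum_congr rfl (fun j _ => hterm j)]
  -- reindex: sum over sets containing j
  set g : C → Finset C → ℝ := fun j R => (f R - f (R.erase j)) * w R with hg
  have hre : ∀ j : C,
      (∑ S ∈ ((Finset.univ : Finset C).erase j).powerset,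
          (f (insert j S) - f S) * w (insert j S))
        = ∑ R ∈ (Finset.univ : Finset C).powerset,
            (if j ∈ R then g j R else 0) := by
    intro j
    have hnotj : j ∉ (Finset.univ : Finset C).erase j := Finset.notMem_erase _ _
    have husplit : (Finset.univ : Finset C)
        = insert j ((Finset.univ : Finset C).erase j) :=
      (Finset.insert_erase (Finset.mem_univ j)).symm
    rw [husplit, Finset.sum_powerset_insert hnotj, Finset.erase_insert hnotj]
    have hz : ∀ S ∈ ((Finset.univ : Finset C).erase j).powerset,
        (if j ∈ S then g j S else 0) = 0 := by
      intro S hS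
      have : j ∉ S := fun h => hnotj (Finset.mem_powerset.mp hS h)
      simp [this]
    have hv : ∀ S ∈ ((Finset.univ : Finset C).erase j).powerset,
        (if j ∈ insert j S then g j (insert j S) else 0)
          = (f (insert j S) - f S) * w (insert j S) := by
      intro S hS
      have hjS : j ∉ S := fun h => hnotj (Finset.mem_powerset.mp hS h)
      rw [if_pos (Finset.mem_insert_self j S), hg]
      simp only
      rw [Finset.erase_insert hjS]
    rw [Finset.sum_congr rfl hz, Finset.sum_congr rfl hv, Finset.sum_const_zero,
      zero_add]
  rw [Finset.sum_congr rfl (fun j _ => hre j), Finset.sum_comm]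
  -- conclude using the combinatorial lemma
  have hfin : ∀ R ∈ (Finset.univ : Finset C).powerset,
      (∑ j : C, if j ∈ R then g j R else 0) ≤ f R * w R := by
    intro R _
    have h1 : (∑ j : C, if j ∈ R then g j R else 0) = ∑ j ∈ R, g j R := by
      rw [Finset.sum_ite_mem, Finset.univ_inter]
    rw [h1, hg]
    simp only
    rw [← Finset.sum_mul]
    exact mul_le_mul_of_nonneg_right (sum_marginals_le f hnonneg hsub R)
      (hwnonneg R)
  calc ∑ R ∈ (Finset.univ : Finset C).powerset, ∑ j : C, (if j ∈ R then g j R else 0)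
      ≤ ∑ R ∈ (Finset.univ : Finset C).powerset, f R * w R :=
        Finset.sum_le_sum hfin
    _ = multilinearExt f x := rfl
end

section
/- Let B₁,…,B_k be negatively correlated Bernoulli random variables (meaning E[Π_{i∈S} B_i] ≤ Π_{i∈S} E[B_i] for all subsets S, and the same for the complements 1−B_i), let β_i ∈ [0,1], X = Σ_i β_i B_i, and μ ≤ E[X]. Then for every δ ∈ (0,1), Pr[X < (1−δ)μ] < (e^{−δ}/(1−δ)^{1−δ})^μ. -/
/-!
Put `θ = 1 - δ`. For a `0/1`-valued `b`, `θ ^ (β * b) = θ ^ β + (1 - θ ^ β) * (1 - b)`, so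
`θ ^ X` is a product of affine functions of the complements `1 - B i` with nonnegative
coefficients. Expanding this product over subsets, negative correlation of the complements bounds
`E[θ ^ X]` by its value `∏ i, (1 - (1 - θ ^ β i) * E[B i])` for independent variables, which is at
most `exp (-δ * E[X])` because `1 - θ ^ β ≥ δ * β` (Bernoulli's inequality). A strict Markov
inequality for `θ ^ X` at the level `θ ^ ((1 - δ) * μ)` then gives the bound.
-/

open MeasureTheory Finset

section

variable {Ω ι : Type*} [MeasurableSpace Ω]

def NegCorrelated (P : Measure Ω) (f : ι → Ω → ℝ) : Prop :=
  ∀ S : Finset ι, ∫ ω, ∏ i ∈ S, f i ω ∂P ≤ ∏ i ∈ S, ∫ ω, f i ω ∂P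

theorem prod_add_mul_eq_sum_powerset [Fintype ι] [DecidableEq ι] (a b g : ι → ℝ) :
    ∏ i, (a i + b i * g i) =
      ∑ S ∈ (univ : Finset ι).powerset,
        ((∏ i ∈ univ \ S, a i) * ∏ i ∈ S, b i) * ∏ i ∈ S, g i := by
  simp_rw [add_comm (a _), prod_add, prod_mul_distrib]
  exact sum_congr rfl fun S _ => by ring

theorem NegCorrelated.integral_prod_add_mul_le [Fintype ι] {P : Measure Ω} {f : ι → Ω → ℝ}
    (hf : NegCorrelated P f) (hint : ∀ S : Finset ι, Integrable (fun ω => ∏ i ∈ S, f i ω) P)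
    {a b : ι → ℝ} (ha : ∀ i, 0 ≤ a i) (hb : ∀ i, 0 ≤ b i) :
    ∫ ω, ∏ i, (a i + b i * f i ω) ∂P ≤ ∏ i, (a i + b i * ∫ ω, f i ω ∂P) := by
  classical
  simp_rw [prod_add_mul_eq_sum_powerset a b]
  rw [integral_finsetSum _ fun S _ => (hint S).const_mul _]
  refine sum_le_sum fun S _ => ?_
  rw [integral_const_mul]
  exact mul_le_mul_of_nonneg_left (hf S)
    (mul_nonneg (prod_nonneg fun i _ => ha i) (prod_nonneg fun i _ => hb i))

theorem integrable_prod_of_abs_le_one {P : Measure Ω} [IsFiniteMeasure P] {f : ι → Ω → ℝ}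
    (hf : ∀ i, Measurable (f i)) (hf1 : ∀ i ω, |f i ω| ≤ 1) (S : Finset ι) :
    Integrable (fun ω => ∏ i ∈ S, f i ω) P :=
  .of_bound (S.measurable_prod fun i _ => hf i).aestronglyMeasurable 1 <| ae_of_all _ fun ω => by
    simpa [norm_prod] using prod_le_one (fun i _ => abs_nonneg _) fun i _ => hf1 i ω

theorem rpow_mul_eq_of_eq_zero_or_eq_one (θ β : ℝ) {x : ℝ} (hx : x = 0 ∨ x = 1) :
    θ ^ (β * x) = θ ^ β + (1 - θ ^ β) * (1 - x) := by
  rcases hx with rfl | rfl <;> simp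

theorem rpow_sum_mul_eq_prod_of_eq_zero_or_eq_one [Fintype ι] {θ : ℝ} (hθ : 0 ≤ θ)
    {β b : ι → ℝ} (hβ : ∀ i, 0 ≤ β i) (hb : ∀ i, b i = 0 ∨ b i = 1) :
    θ ^ (∑ i, β i * b i) = ∏ i, (θ ^ β i + (1 - θ ^ β i) * (1 - b i)) := by
  have hβb : ∀ i ∈ univ, 0 ≤ β i * b i := fun i _ => by
    rcases hb i with h | h <;> simp [h, hβ i]
  rw [Real.rpow_sum_of_nonneg hθ hβb]
  exact prod_congr rfl fun i _ => rpow_mul_eq_of_eq_zero_or_eq_one θ (β i) (hb i)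

theorem prod_one_sub_le_exp_neg_sum [Fintype ι] {x : ι → ℝ} (hx : ∀ i, x i ≤ 1) :
    ∏ i, (1 - x i) ≤ Real.exp (-∑ i, x i) := by
  rw [← sum_neg_distrib, Real.exp_sum]
  exact prod_le_prod (fun i _ => sub_nonneg.2 (hx i)) fun i _ => Real.one_sub_le_exp_neg _

theorem integral_rpow_weighted_sum_le_exp [Fintype ι] {P : Measure Ω} [IsProbabilityMeasure P]
    {B : ι → Ω → ℝ} (hmeas : ∀ i, Measurable (B i)) (hB : ∀ i ω, B i ω = 0 ∨ B i ω = 1)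
    (hnegCompl : NegCorrelated P fun i ω => 1 - B i ω)
    {β : ι → ℝ} (hβ : ∀ i, β i ∈ Set.Icc (0 : ℝ) 1) {δ : ℝ} (hδ : δ ∈ Set.Icc (0 : ℝ) 1) :
    ∫ ω, (1 - δ) ^ (∑ i, β i * B i ω) ∂P ≤ Real.exp (-(δ * ∫ ω, ∑ i, β i * B i ω ∂P)) := by
  obtain ⟨hδ0, hδ1⟩ := hδ
  have hB01 : ∀ i ω, 0 ≤ B i ω ∧ B i ω ≤ 1 := fun i ω => by
    rcases hB i ω with h | h <;> simp [h]
  have hBint : ∀ i, Integrable (B i) P := fun i =>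
    .of_bound (hmeas i).aestronglyMeasurable 1 <| ae_of_all _ fun ω => by
      simpa [abs_of_nonneg (hB01 i ω).1] using (hB01 i ω).2
  set p : ι → ℝ := fun i => ∫ ω, B i ω ∂P
  have hp : ∀ i, 0 ≤ p i ∧ p i ≤ 1 := fun i =>
    ⟨integral_nonneg fun ω => (hB01 i ω).1, by
      simpa using integral_mono (hBint i) (integrable_const 1) fun ω => (hB01 i ω).2⟩
  have hpCompl : ∀ i, ∫ ω, (1 - B i ω) ∂P = 1 - p i := fun i => by
    simp [integral_sub (integrable_const 1) (hBint i), p]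
  have hEX : ∫ ω, ∑ i, β i * B i ω ∂P = ∑ i, β i * p i := by
    rw [integral_finsetSum _ fun i _ => (hBint i).const_mul _]
    exact sum_congr rfl fun i _ => integral_const_mul _ _
  set c : ι → ℝ := fun i => (1 - δ) ^ β i
  have hc0 : ∀ i, 0 ≤ c i := fun i => Real.rpow_nonneg (by linarith) _
  have hc : ∀ i, c i ≤ 1 - δ * β i := fun i => by
    have := rpow_one_add_le_one_add_mul_self (s := -δ) (by linarith) (hβ i).1 (hβ i).2
    simp only [c]; rw [sub_eq_add_neg]; linarith
  have hintCompl : ∀ S : Finset ι, Integrable (fun ω => ∏ i ∈ S, (1 - B i ω)) P :=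
    integrable_prod_of_abs_le_one (fun i => measurable_const.sub (hmeas i)) fun i ω =>
      abs_le.2 ⟨by linarith [hB01 i ω], by linarith [hB01 i ω]⟩
  calc ∫ ω, (1 - δ) ^ (∑ i, β i * B i ω) ∂P
      = ∫ ω, ∏ i, (c i + (1 - c i) * (1 - B i ω)) ∂P := by
        congr 1 with ω
        exact rpow_sum_mul_eq_prod_of_eq_zero_or_eq_one (by linarith) (fun i => (hβ i).1) (hB · ω)
    _ ≤ ∏ i, (c i + (1 - c i) * ∫ ω, (1 - B i ω) ∂P) :=
        hnegCompl.integral_prod_add_mul_le hintCompl hc0 fun i => by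
          nlinarith [hc i, mul_nonneg hδ0 (hβ i).1]
    _ = ∏ i, (1 - (1 - c i) * p i) := prod_congr rfl fun i _ => by rw [hpCompl]; ring
    _ ≤ Real.exp (-∑ i, (1 - c i) * p i) := prod_one_sub_le_exp_neg_sum fun i => by
        nlinarith [hc0 i, hp i, hc i, (hβ i).1]
    _ ≤ Real.exp (-(δ * ∫ ω, ∑ i, β i * B i ω ∂P)) := by
        rw [hEX, mul_sum, Real.exp_le_exp, neg_le_neg_iff]
        exact sum_le_sum fun i _ => by nlinarith [hc i, hp i]

end

theorem chernoff_lower_tail_negatively_correlated_general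
    {Ω : Type*} [MeasurableSpace Ω] (P : Measure Ω) [IsProbabilityMeasure P]
    (k : ℕ) (B : Fin k → Ω → ℝ)
    (hmeas : ∀ i, Measurable (B i))
    (hBernoulli : ∀ i ω, B i ω = 0 ∨ B i ω = 1)
    (hnegCompl : ∀ S : Finset (Fin k),
      (∫ ω, ∏ i ∈ S, (1 - B i ω) ∂P) ≤ ∏ i ∈ S, ∫ ω, (1 - B i ω) ∂P)
    (β : Fin k → ℝ) (hβ : ∀ i, β i ∈ Set.Icc (0:ℝ) 1)
    (X : Ω → ℝ) (hX : X = fun ω => ∑ i, β i * B i ω)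
    (μ : ℝ) (hμ : μ ≤ ∫ ω, X ω ∂P)
    (δ : ℝ) (hδ : δ ∈ Set.Ioo (0:ℝ) 1) :
    (P {ω | X ω < (1 - δ) * μ}).toReal
      < (Real.exp (-δ) / (1 - δ) ^ (1 - δ)) ^ μ := by
  obtain ⟨hδ0, hδ1⟩ := hδ
  have hθ0 : 0 < 1 - δ := by linarith
  have hθ1 : 1 - δ < 1 := by linarith
  have hX0 : ∀ ω, 0 ≤ X ω := fun ω => hX ▸ sum_nonneg fun i _ =>
    mul_nonneg (hβ i).1 (by rcases hBernoulli i ω with h | h <;> simp [h])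
  have hXmeas : Measurable X := hX ▸ measurable_sum _ fun i _ => (hmeas i).const_mul _
  set Y : Ω → ℝ := fun ω => (1 - δ) ^ X ω
  set R : ℝ := (1 - δ) ^ ((1 - δ) * μ)
  have hY0 : 0 ≤ Y := fun ω => Real.rpow_nonneg hθ0.le _
  have hYint : Integrable Y P :=
    .of_bound (measurable_const.pow hXmeas).aestronglyMeasurable 1 <| ae_of_all _ fun ω => by
      rw [Real.norm_of_nonneg (hY0 ω)]
      exact Real.rpow_le_one hθ0.le hθ1.le (hX0 ω)
  have hmoment : ∫ ω, Y ω ∂P ≤ Real.exp (-(δ * μ)) := by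
    refine le_trans ?_ (Real.exp_le_exp.2 (by nlinarith : -(δ * ∫ ω, X ω ∂P) ≤ -(δ * μ)))
    subst hX
    exact integral_rpow_weighted_sum_le_exp hmeas hBernoulli hnegCompl hβ ⟨hδ0.le, hδ1.le⟩
  have hset : {ω | X ω < (1 - δ) * μ} = {ω | R < Y ω} := by
    ext ω; simp [Y, R, Real.rpow_lt_rpow_left_iff_of_base_lt_one hθ0 hθ1]
  have hbound : (Real.exp (-δ) / (1 - δ) ^ (1 - δ)) ^ μ = Real.exp (-(δ * μ)) / R := by
    rw [Real.div_rpow (Real.exp_pos _).le (Real.rpow_nonneg hθ0.le _), ← Real.exp_mul,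
      ← Real.rpow_mul hθ0.le, neg_mul]
  rw [hset, hbound, lt_div_iff₀ (Real.rpow_pos_of_pos hθ0 _)]
  by_cases hzero : P {ω | R < Y ω} = 0
  · simp only [hzero, ENNReal.toReal_zero, zero_mul]
    positivity
  calc _ < ∫ ω in {ω | R < Y ω}, Y ω ∂P :=
        setIntegral_gt_gt (Real.rpow_nonneg hθ0.le _) hYint.integrableOn hzero
    _ ≤ ∫ ω, Y ω ∂P := setIntegral_le_integral hYint (ae_of_all _ hY0)
    _ ≤ Real.exp (-(δ * μ)) := hmoment

/-- Multiplicative Chernoff lower-tail bound for a weighted sum of negatively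
correlated Bernoulli random variables. -/
theorem chernoff_lower_tail_negatively_correlated
    {Ω : Type*} [MeasurableSpace Ω] (P : Measure Ω) [IsProbabilityMeasure P]
    (k : ℕ) (B : Fin k → Ω → ℝ)
    (hmeas : ∀ i, Measurable (B i))
    (hBernoulli : ∀ i ω, B i ω = 0 ∨ B i ω = 1)
    (hneg : ∀ S : Finset (Fin k),
      (∫ ω, ∏ i ∈ S, B i ω ∂P) ≤ ∏ i ∈ S, ∫ ω, B i ω ∂P)
    (hnegCompl : ∀ S : Finset (Fin k),
      (∫ ω, ∏ i ∈ S, (1 - B i ω) ∂P) ≤ ∏ i ∈ S, ∫ ω, (1 - B i ω) ∂P)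
    (β : Fin k → ℝ) (hβ : ∀ i, β i ∈ Set.Icc (0:ℝ) 1)
    (X : Ω → ℝ) (hX : X = fun ω => ∑ i, β i * B i ω)
    (μ : ℝ) (hμ : μ ≤ ∫ ω, X ω ∂P)
    (δ : ℝ) (hδ : δ ∈ Set.Ioo (0:ℝ) 1) :
    (P {ω | X ω < (1 - δ) * μ}).toReal
      < (Real.exp (-δ) / (1 - δ) ^ (1 - δ)) ^ μ :=
  chernoff_lower_tail_negatively_correlated_general P k B hmeas hBernoulli hnegCompl β hβ X hX μ hμ
    δ hδ
end

section
/- For independent Bernoulli variables X_j with Pr[X_j = 1] = x_j and weights s_j ∈ [0, κB] with Σ_j s_j x_j ≤ κB, where κ ∈ (0,1], we have Pr[Σ_j s_j X_j > B] ≤ (κ e^{1−κ})^{1/κ}. -/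
open MeasureTheory Finset

/-!
Exponential moment method with the slope `t = -log κ / (κB)`, chosen so that `e^{tκB} = 1/κ`.
For a Bernoulli indicator `X` with `P[X = 1] = p` one has
`E[e^{u s X}] = 1 + (e^{u s} - 1) p ≤ exp((e^{u s} - 1) p)`, and convexity of `exp` on `[0, tκB]`
gives `e^{t s} - 1 ≤ (s / κB)(e^{tκB} - 1)` for `0 ≤ s ≤ κB`. By independence and the budget,
`E[e^{t ∑ s_j X_j}] ≤ exp(1/κ - 1)`, and Markov's inequality yields
`P[∑ s_j X_j > B] ≤ e^{-tB} e^{1/κ - 1} = κ^{1/κ} e^{(1-κ)/κ}`.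
-/

open Real ProbabilityTheory

section Bernoulli

variable {Ω : Type*} {X : Ω → ℝ}

lemma exp_mul_eq_one_add_indicator (h01 : ∀ ω, X ω = 0 ∨ X ω = 1) (u : ℝ) (ω : Ω) :
    exp (u * X ω) = 1 + {ω | X ω = 1}.indicator (fun _ ↦ exp u - 1) ω := by
  rcases h01 ω with h | h <;> simp [Set.indicator, h]

variable [MeasurableSpace Ω] {P : Measure Ω}

lemma integrable_exp_mul_of_zero_or_one [IsFiniteMeasure P] (hX : Measurable X)
    (h01 : ∀ ω, X ω = 0 ∨ X ω = 1) (u : ℝ) :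
    Integrable (fun ω ↦ exp (u * X ω)) P := by
  simp_rw [exp_mul_eq_one_add_indicator h01 u]
  exact (integrable_const 1).add
    ((integrable_const _).indicator (hX (measurableSet_singleton 1)))

lemma mgf_of_zero_or_one [IsProbabilityMeasure P] (hX : Measurable X)
    (h01 : ∀ ω, X ω = 0 ∨ X ω = 1) (u : ℝ) :
    mgf X P u = 1 + (exp u - 1) * P.real {ω | X ω = 1} := by
  have hA : MeasurableSet {ω | X ω = 1} := hX (measurableSet_singleton 1)
  simp_rw [mgf, exp_mul_eq_one_add_indicator h01 u]
  rw [integral_add (integrable_const 1) ((integrable_const _).indicator hA),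
    integral_indicator_const _ hA]
  simp [mul_comm]

end Bernoulli

lemma ProbabilityTheory.iIndepFun.const_mul {Ω J : Type*} [MeasurableSpace Ω] {P : Measure Ω}
    {X : J → Ω → ℝ} (hindep : iIndepFun X P) (s : J → ℝ) :
    iIndepFun (fun j ω ↦ s j * X j ω) P :=
  hindep.comp _ fun j ↦ measurable_const_mul (s j)

section WeightedSum

variable {Ω : Type*} [MeasurableSpace Ω] {P : Measure Ω} [IsProbabilityMeasure P]
  {J : Type*} [Fintype J] {X : J → Ω → ℝ}

lemma mgf_weighted_sum_le_exp (hmeas : ∀ j, Measurable (X j))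
    (h01 : ∀ j ω, X j ω = 0 ∨ X j ω = 1) (hindep : iIndepFun X P) (s : J → ℝ) (t : ℝ) :
    mgf (fun ω ↦ ∑ j, s j * X j ω) P t
      ≤ exp (∑ j, (exp (s j * t) - 1) * P.real {ω | X j ω = 1}) := by
  have hsum : (fun ω ↦ ∑ j, s j * X j ω) = ∑ j, fun ω ↦ s j * X j ω := by
    ext ω; simp
  rw [hsum, (hindep.const_mul s).mgf_sum (fun j ↦ (hmeas j).const_mul (s j)), exp_sum]
  refine prod_le_prod (fun j _ ↦ ?_) fun j _ ↦ ?_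
  · rw [mgf_const_mul, mgf_of_zero_or_one (hmeas j) (h01 j)]
    have hp : P.real {ω | X j ω = 1} ≤ 1 := measureReal_le_one
    nlinarith [exp_pos (s j * t), measureReal_nonneg (μ := P) (s := {ω | X j ω = 1})]
  · rw [mgf_const_mul, mgf_of_zero_or_one (hmeas j) (h01 j), add_comm]
    exact add_one_le_exp _

lemma measureReal_lt_weighted_sum_le (hmeas : ∀ j, Measurable (X j))
    (h01 : ∀ j ω, X j ω = 0 ∨ X j ω = 1) (hindep : iIndepFun X P) (s : J → ℝ)
    {t : ℝ} (ht : 0 ≤ t) (B : ℝ) :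
    P.real {ω | B < ∑ j, s j * X j ω}
      ≤ exp (-t * B) * exp (∑ j, (exp (s j * t) - 1) * P.real {ω | X j ω = 1}) := by
  have hint : Integrable (fun ω ↦ exp (t * ∑ j, s j * X j ω)) P := by
    have := (hindep.const_mul s).integrable_exp_mul_sum (t := t) (s := univ)
      (fun j ↦ (hmeas j).const_mul (s j)) fun j _ ↦ by
        simpa [mul_assoc] using integrable_exp_mul_of_zero_or_one (hmeas j) (h01 j) (t * s j)
    simpa using this
  calc P.real {ω | B < ∑ j, s j * X j ω}
      ≤ P.real {ω | B ≤ ∑ j, s j * X j ω} :=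
        measureReal_mono fun ω (h : B < _) ↦ h.le
    _ ≤ exp (-t * B) * mgf (fun ω ↦ ∑ j, s j * X j ω) P t := measure_ge_le_exp_mul_mgf B ht hint
    _ ≤ _ := by gcongr; exact mgf_weighted_sum_le_exp hmeas h01 hindep s t

end WeightedSum

lemma exp_mul_sub_one_le_div_mul {t s M : ℝ} (hs : 0 ≤ s) (hsM : s ≤ M)
    (hM : 0 < M) : exp (s * t) - 1 ≤ s / M * (exp (M * t) - 1) := by
  have h := convexOn_exp.2 (Set.mem_univ 0) (Set.mem_univ (M * t))
    (sub_nonneg.2 ((div_le_one hM).2 hsM)) (div_nonneg hs hM.le) (sub_add_cancel 1 _)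
  have hcomb : (1 - s / M) * 0 + s / M * (M * t) = s * t := by
    rw [mul_zero, zero_add]; field_simp
  simp only [smul_eq_mul, exp_zero, hcomb] at h
  linarith

lemma sum_exp_mul_sub_one_mul_le {J : Type*} (S : Finset J) {s x : J → ℝ} {t M : ℝ}
    (ht : 0 ≤ t) (hM : 0 < M) (hs : ∀ j, s j ∈ Set.Icc 0 M) (hx : ∀ j, 0 ≤ x j)
    (hbudget : ∑ j ∈ S, s j * x j ≤ M) :
    ∑ j ∈ S, (exp (s j * t) - 1) * x j ≤ exp (M * t) - 1 := by
  have hc : 0 ≤ exp (M * t) - 1 := sub_nonneg.2 (one_le_exp (mul_nonneg hM.le ht))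
  calc ∑ j ∈ S, (exp (s j * t) - 1) * x j
      ≤ ∑ j ∈ S, s j / M * (exp (M * t) - 1) * x j := by
        gcongr with j
        exacts [hx j, exp_mul_sub_one_le_div_mul (hs j).1 (hs j).2 hM]
    _ = (exp (M * t) - 1) * ((∑ j ∈ S, s j * x j) / M) := by
        rw [sum_div, mul_sum]; congr 1 with j; ring
    _ ≤ exp (M * t) - 1 := mul_le_of_le_one_right hc ((div_le_one hM).2 hbudget)

lemma mul_exp_one_sub_rpow_inv {κ : ℝ} (hκ : 0 < κ) :
    (κ * exp (1 - κ)) ^ (1 / κ) = exp (log κ / κ) * exp (κ⁻¹ - 1) := by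
  rw [← exp_add, rpow_def_of_pos (by positivity), log_mul hκ.ne' (exp_ne_zero _), log_exp]
  congr 1
  field_simp

/-- Chernoff upper-tail bound: for independent Bernoulli indicators `X j` with
success probabilities `x j`, weights `s j ∈ [0, κB]` and expected total weight
`∑ j, s j * x j ≤ κB` with `κ ∈ (0,1]`, the probability that the total weight
exceeds `B` is at most `(κ e^{1−κ})^{1/κ}`. -/
theorem chernoff_upper_tail_budget
    {Ω : Type*} [MeasurableSpace Ω] (P : Measure Ω) [IsProbabilityMeasure P]
    {J : Type*} [Fintype J]
    (X : J → Ω → ℝ)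
    (hmeas : ∀ j, Measurable (X j))
    (hBernoulli : ∀ j ω, X j ω = 0 ∨ X j ω = 1)
    (hindep : ProbabilityTheory.iIndepFun X P)
    (x : J → ℝ) (hx01 : ∀ j, x j ∈ Set.Icc (0:ℝ) 1)
    (hprob : ∀ j, P {ω | X j ω = 1} = ENNReal.ofReal (x j))
    (κ B : ℝ) (hκ : κ ∈ Set.Ioc (0:ℝ) 1) (hB : 0 < B)
    (s : J → ℝ) (hs : ∀ j, s j ∈ Set.Icc (0:ℝ) (κ * B))
    (hbudget : ∑ j, s j * x j ≤ κ * B) :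
    (P {ω | B < ∑ j, s j * X j ω}).toReal ≤ (κ * Real.exp (1 - κ)) ^ (1 / κ) := by
  obtain ⟨hκ0, hκ1⟩ := hκ
  have hκB : 0 < κ * B := mul_pos hκ0 hB
  set t := -log κ / (κ * B)
  have ht : 0 ≤ t := div_nonneg (neg_nonneg.2 (log_nonpos hκ0.le hκ1)) hκB.le
  have hexp : exp (κ * B * t) = κ⁻¹ := by
    rw [mul_div_cancel₀ _ hκB.ne', exp_neg, exp_log hκ0]
  have htB : -t * B = log κ / κ := by simp only [t]; field_simp
  have hp : ∀ j, P.real {ω | X j ω = 1} = x j := fun j ↦ by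
    rw [measureReal_def, hprob j, ENNReal.toReal_ofReal (hx01 j).1]
  rw [← measureReal_def]
  calc P.real {ω | B < ∑ j, s j * X j ω}
      ≤ exp (-t * B) * exp (∑ j, (exp (s j * t) - 1) * x j) := by
        simpa only [hp] using measureReal_lt_weighted_sum_le hmeas hBernoulli hindep s ht B
    _ ≤ exp (log κ / κ) * exp (κ⁻¹ - 1) := by
        rw [htB, ← hexp]
        gcongr
        exact sum_exp_mul_sub_one_mul_le univ ht hκB hs (fun j ↦ (hx01 j).1) hbudget
    _ = (κ * exp (1 - κ)) ^ (1 / κ) := (mul_exp_one_sub_rpow_inv hκ0).symm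
end

section
/- Under the Lindahl equilibrium price conditions — Σ_j p^t_{ij} x_j = B/n' for every voter i ∈ W (where |W| = n'), and Σ_{i∈W} p^t_{ij} ≤ s_j for every candidate j — if S ⊆ W and an allocation z satisfies Σ_j p^t_{ij} z_j ≥ θ · B/n' for every i ∈ S, then |S| ≤ (n'/B) · (Σ_j s_j z_j)/θ. -/
open Finset

/-!
Summing the deviation condition over `S` and exchanging the order of summation, the coalition's
total payment `∑ i ∈ S, ∑ j, p i j * z j` is at least `|S| · θB/n'`; since prices are nonnegative
and the price of each candidate collected over all of `W` is at most its size, that payment is at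
most `∑ j, s j * z j`.
-/

theorem sum_sum_mul_le_sum_mul_of_subset {V C : Type*} [Fintype C]
    {W S : Finset V} (hSW : S ⊆ W) {p : V → C → ℝ} (hp : ∀ i j, 0 ≤ p i j)
    {s z : C → ℝ} (hprice : ∀ j, ∑ i ∈ W, p i j ≤ s j) (hz : ∀ j, 0 ≤ z j) :
    ∑ i ∈ S, ∑ j, p i j * z j ≤ ∑ j, s j * z j := by
  rw [Finset.sum_comm]
  refine Finset.sum_le_sum fun j _ => ?_
  rw [← Finset.sum_mul]
  have hS : ∑ i ∈ S, p i j ≤ s j :=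
    (Finset.sum_le_sum_of_subset_of_nonneg hSW fun i _ _ => hp i j).trans (hprice j)
  exact mul_le_mul_of_nonneg_right hS (hz j)

theorem coalition_size_bound_lindahl_general
    {V C : Type*} [Fintype C]
    (W : Finset V) (n' : ℕ) (hn'pos : 0 < n')
    (B : ℝ) (hB : 0 < B) (θ : ℝ) (hθ : 0 < θ)
    (s : C → ℝ)
    (p : V → C → ℝ) (hp : ∀ i j, 0 ≤ p i j)
    (hprice : ∀ j, ∑ i ∈ W, p i j ≤ s j)
    (S : Finset V) (hSW : S ⊆ W)
    (z : C → ℝ) (hz : ∀ j, 0 ≤ z j)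
    (hdev : ∀ i ∈ S, θ * B / n' ≤ ∑ j, p i j * z j) :
    (S.card : ℝ) ≤ (n' / B) * (∑ j, s j * z j) / θ := by
  have hshare : 0 < θ * B / n' := by positivity
  have hpay : (S.card : ℝ) * (θ * B / n') ≤ ∑ j, s j * z j := by
    calc (S.card : ℝ) * (θ * B / n') = S.card • (θ * B / n') := (nsmul_eq_mul _ _).symm
      _ ≤ ∑ i ∈ S, ∑ j, p i j * z j := Finset.card_nsmul_le_sum _ _ _ hdev
      _ ≤ ∑ j, s j * z j := sum_sum_mul_le_sum_mul_of_subset hSW hp hprice hz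
  calc (S.card : ℝ) ≤ (∑ j, s j * z j) / (θ * B / n') := (le_div_iff₀ hshare).2 hpay
    _ = (n' / B) * (∑ j, s j * z j) / θ := by field_simp

/-- Bounding a deviating coalition via Lindahl equilibrium prices:
if every voter in `S` pays at least `θ · B/n'` for the deviating allocation `z`,
then `|S| ≤ (n'/B) · (∑ j, s j * z j) / θ`. -/
theorem coalition_size_bound_lindahl
    {V C : Type*} [Fintype C] [DecidableEq V]
    (W : Finset V) (n' : ℕ) (hn' : n' = W.card) (hn'pos : 0 < n')
    (B : ℝ) (hB : 0 < B) (θ : ℝ) (hθ : 0 < θ)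
    (s : C → ℝ) (hs : ∀ j, 0 < s j)
    (x : C → ℝ) (hx : ∀ j, 0 ≤ x j)
    (p : V → C → ℝ) (hp : ∀ i j, 0 ≤ p i j)
    (hendow : ∀ i ∈ W, ∑ j, p i j * x j = B / n')
    (hprice : ∀ j, ∑ i ∈ W, p i j ≤ s j)
    (S : Finset V) (hSW : S ⊆ W)
    (z : C → ℝ) (hz : ∀ j, 0 ≤ z j)
    (hdev : ∀ i ∈ S, θ * B / n' ≤ ∑ j, p i j * z j) :
    (S.card : ℝ) ≤ (n' / B) * (∑ j, s j * z j) / θ :=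
  coalition_size_bound_lindahl_general W n' hn'pos B hB θ hθ s p hp hprice S hSW z hz hdev
end

section
/- There exists an instance with 6 voters, 30 unit-size candidates, budget b = 15, and monotone utility functions, such that for every constant α ≥ 1 there is a choice of utility parameters for which no feasible committee lies in the α-core: for every committee E of size at most 15, there exist two voters and a set T of 5 candidates with total size 5 ≤ (2/6)·15 such that u_i(T) > α · u_i(E ∪ {q}) for both voters i and every additament q. -/
/-!
The second favorites form two 3-cycles of gadgets. If every voter `k` had 4 or more candidates
of `g_k` or of `g_{s k}` in `E`, two gadgets of each 3-cycle would meet `E` in 4 candidates,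
so `|E| ≥ 16`. Hence for some `k` both `g_k` and `g_{s k}` meet `E` in at most 3 of their 5
candidates, and one additament completes neither. Deviating to `T = g_{s k}` gives voter `s k`
utility `α + 1` against at most `1` (only its second favorite can be complete), and voter `k`
utility `1` against `0`.
-/

open Finset

section TwoGadgetUtility

variable {β : Type*} [DecidableEq β]

/-- `(α + 1)·1[x(E) = 1] + 1[y(E) = 1]`, with `F`, `S` the favorite and second-favorite gadget. -/
noncomputable def twoGadgetUtility (α : ℝ) (F S E : Finset β) : ℝ :=
  (α + 1) * (if F ⊆ E then 1 else 0) + (if S ⊆ E then 1 else 0)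

variable {α : ℝ} {F S E : Finset β}

lemma twoGadgetUtility_mono (hα : -1 ≤ α) : Monotone (twoGadgetUtility α F S) := by
  intro E E' hEE'
  have indicator_mono : ∀ G : Finset β,
      (if G ⊆ E then (1 : ℝ) else 0) ≤ if G ⊆ E' then 1 else 0 := by
    intro G
    split_ifs with hE hE'
    exacts [le_rfl, absurd (hE.trans hEE') hE', zero_le_one, le_rfl]
  unfold twoGadgetUtility
  gcongr
  · linarith
  · exact indicator_mono F
  · exact indicator_mono S

lemma add_one_le_twoGadgetUtility_self : α + 1 ≤ twoGadgetUtility α F S F := by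
  simp only [twoGadgetUtility, subset_refl, if_true]
  split_ifs <;> simp

lemma twoGadgetUtility_le_one (hF : ¬ F ⊆ E) : twoGadgetUtility α F S E ≤ 1 := by
  unfold twoGadgetUtility
  split_ifs <;> simp

lemma twoGadgetUtility_eq_zero (hF : ¬ F ⊆ E) (hS : ¬ S ⊆ E) : twoGadgetUtility α F S E = 0 := by
  simp [twoGadgetUtility, hF, hS]

lemma twoGadgetUtility_self_right (hF : ¬ F ⊆ S) : twoGadgetUtility α F S S = 1 := by
  simp [twoGadgetUtility, hF]

end TwoGadgetUtility

lemma not_subset_insert_of_card_inter_add_one_lt {β : Type*} [DecidableEq β]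
    {G E : Finset β} (q : β) (h : #(E ∩ G) + 1 < #G) : ¬ G ⊆ insert q E := by
  intro hG
  have : G ⊆ insert q (E ∩ G) := fun x hx => by
    rcases mem_insert.mp (hG hx) with rfl | hxE
    · exact mem_insert_self _ _
    · exact mem_insert_of_mem (mem_inter.mpr ⟨hxE, hx⟩)
  have := (card_le_card this).trans (card_insert_le q _)
  omega

def gadgetOf (c : Fin 30) : Fin 6 := ⟨c.val / 5, by omega⟩

def gadget (k : Fin 6) : Finset (Fin 30) := {c | gadgetOf c = k}

-- The paper's `s = (2, 3, 1, 5, 6, 4)`, shifted to `0`-based indices.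
def secondFavorite : Fin 6 → Fin 6 := ![1, 2, 0, 4, 5, 3]

lemma card_gadget (k : Fin 6) : #(gadget k) = 5 := by
  revert k; decide

lemma secondFavorite_ne (k : Fin 6) : secondFavorite k ≠ k := by
  revert k; decide

lemma not_gadget_subset_gadget_secondFavorite (k : Fin 6) :
    ¬ gadget k ⊆ gadget (secondFavorite k) := by
  revert k; decide

lemma sum_card_inter_gadget (E : Finset (Fin 30)) : ∑ k, #(E ∩ gadget k) = #E := by
  rw [card_eq_sum_card_fiberwise (f := gadgetOf) (t := univ) (fun _ _ => mem_univ _)]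
  congr! 2 with k
  ext c
  simp [gadget]

lemma exists_le_three_of_sum_le_fifteen (n : Fin 6 → ℕ) (h : ∑ k, n k ≤ 15) :
    ∃ k, n k ≤ 3 ∧ n (secondFavorite k) ≤ 3 := by
  by_contra! hn
  have h0 : n 0 ≤ 3 → 3 < n 1 := hn 0
  have h1 : n 1 ≤ 3 → 3 < n 2 := hn 1
  have h2 : n 2 ≤ 3 → 3 < n 0 := hn 2
  have h3 : n 3 ≤ 3 → 3 < n 4 := hn 3
  have h4 : n 4 ≤ 3 → 3 < n 5 := hn 4
  have h5 : n 5 ≤ 3 → 3 < n 3 := hn 5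
  rw [Fin.sum_univ_six] at h
  omega

/-- Lower bound for general monotone utilities: with 6 voters, 30 unit-size
candidates and budget 15, for every `α ≥ 1` there are monotone utilities such
that every feasible committee `E` (with `|E| ≤ 15`) is blocked: two voters can
deviate to a committee `T` of 5 candidates (total size `5 ≤ (2/6)·15`) with
`u_i(T) > α · u_i(E ∪ {q})` for both voters `i` and every additament `q`. -/
theorem general_monotone_core_lower_bound :
    ∀ α : ℝ, 1 ≤ α →
      ∃ u : Fin 6 → Finset (Fin 30) → ℝ,
        (∀ i, ∀ S T : Finset (Fin 30), S ⊆ T → u i S ≤ u i T) ∧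
        ∀ E : Finset (Fin 30), E.card ≤ 15 →
          ∃ i₁ i₂ : Fin 6, i₁ ≠ i₂ ∧
            ∃ T : Finset (Fin 30), T.card = 5 ∧
              ∀ q : Fin 30,
                u i₁ T > α * u i₁ (insert q E) ∧
                u i₂ T > α * u i₂ (insert q E) := by
  intro α hα
  refine ⟨fun i => twoGadgetUtility α (gadget i) (gadget (secondFavorite i)),
    fun i S T hST => twoGadgetUtility_mono (by linarith) hST, fun E hE => ?_⟩
  obtain ⟨k, hk, hsk⟩ :=
    exists_le_three_of_sum_le_fifteen _ ((sum_card_inter_gadget E).trans_le hE)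
  have incomplete : ∀ j, #(E ∩ gadget j) ≤ 3 → ∀ q, ¬ gadget j ⊆ insert q E := fun j hj q =>
    not_subset_insert_of_card_inter_add_one_lt q (by rw [card_gadget]; omega)
  refine ⟨secondFavorite k, k, secondFavorite_ne k, gadget (secondFavorite k), card_gadget _,
    fun q => ⟨?_, ?_⟩⟩
  · calc α * twoGadgetUtility α _ _ (insert q E)
        ≤ α * 1 := by
          gcongr
          exact twoGadgetUtility_le_one (incomplete _ hsk q)
      _ < α + 1 := by linarith
      _ ≤ _ := add_one_le_twoGadgetUtility_self
  · simp only [twoGadgetUtility_self_right (not_gadget_subset_gadget_secondFavorite k),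
      twoGadgetUtility_eq_zero (incomplete _ hk q) (incomplete _ hsk q), mul_zero]
    exact one_pos
end

section
/- Let A and B be disjoint finite sets, z ∈ [0,1], and for E ⊆ A ∪ B let x(E) = |E ∩ A|/|A| and y(E) = |E ∩ B|/|B|. Then u(E) = x(E) + z·(1 − x(E))·y(E) is a monotone submodular set function. -/
/-!
Both shares `x(E) = |E ∩ A|/|A|` and `y(E) = |E ∩ B|/|B|` are modular, so adding `t ∉ E`
moves `(x, y)` by an increment `(d, e) ≥ 0` that does not depend on `E`. The resulting gain
`d + z((1 - x)e - d(y + e))` of `u = x + z(1 - x)y` is antitone in `x` and `y`, which is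
submodularity. Monotonicity follows from
`u(x', y') - u(x, y) = (x' - x)(1 - zy') + z(1 - x)(y' - y)`, both terms being nonnegative.
-/

open Finset

def gadgetUtility (z x y : ℝ) : ℝ := x + z * (1 - x) * y

lemma gadgetUtility_mono {z x x' y y' : ℝ} (hz : z ∈ Set.Icc (0:ℝ) 1) (hx : x ≤ x')
    (hx1 : x ≤ 1) (hy : y ≤ y') (hy1 : y' ≤ 1) :
    gadgetUtility z x y ≤ gadgetUtility z x' y' := by
  obtain ⟨hz0, hz1⟩ := hz
  have hzy : z * y' ≤ 1 := by nlinarith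
  calc gadgetUtility z x y
      ≤ gadgetUtility z x y + ((x' - x) * (1 - z * y') + z * (1 - x) * (y' - y)) := by
        have := mul_nonneg (sub_nonneg.2 hx) (sub_nonneg.2 hzy)
        have := mul_nonneg (mul_nonneg hz0 (sub_nonneg.2 hx1)) (sub_nonneg.2 hy)
        linarith
    _ = gadgetUtility z x' y' := by unfold gadgetUtility; ring

lemma gadgetUtility_increment_antitone {z x x' y y' d e : ℝ} (hz : 0 ≤ z) (hx : x ≤ x')
    (hy : y ≤ y') (hd : 0 ≤ d) (he : 0 ≤ e) :
    gadgetUtility z (x' + d) (y' + e) - gadgetUtility z x' y' ≤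
      gadgetUtility z (x + d) (y + e) - gadgetUtility z x y := by
  have hgap : 0 ≤ z * ((x' - x) * e + d * (y' - y)) :=
    mul_nonneg hz (add_nonneg (mul_nonneg (sub_nonneg.2 hx) he) (mul_nonneg hd (sub_nonneg.2 hy)))
  have : (gadgetUtility z (x + d) (y + e) - gadgetUtility z x y) -
      (gadgetUtility z (x' + d) (y' + e) - gadgetUtility z x' y') =
      z * ((x' - x) * e + d * (y' - y)) := by
    unfold gadgetUtility; ring
  linarith

section share

variable {γ : Type*} [DecidableEq γ]

noncomputable def share (A E : Finset γ) : ℝ := ((E ∩ A).card : ℝ) / A.card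

lemma share_nonneg (A E : Finset γ) : 0 ≤ share A E := by
  unfold share; positivity

lemma share_le_one (A E : Finset γ) : share A E ≤ 1 :=
  div_le_one_of_le₀ (by exact_mod_cast card_le_card inter_subset_right) (Nat.cast_nonneg _)

lemma share_mono (A : Finset γ) {E E' : Finset γ} (h : E ⊆ E') : share A E ≤ share A E' :=
  div_le_div_of_nonneg_right (by exact_mod_cast card_le_card (inter_subset_inter_right h))
    (Nat.cast_nonneg _)

lemma share_union_singleton (A : Finset γ) {E : Finset γ} {t : γ} (ht : t ∉ E) :
    share A (E ∪ {t}) = share A E + share A {t} := by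
  have hdisj : Disjoint (E ∩ A) ({t} ∩ A) :=
    disjoint_of_subset_left inter_subset_left
      (disjoint_of_subset_right inter_subset_left (disjoint_singleton_right.2 ht))
  unfold share
  rw [union_inter_distrib_right, card_union_of_disjoint hdisj, Nat.cast_add, add_div]

end share

theorem gadget_utility_monotone_submodular_general
    {γ : Type*} [DecidableEq γ]
    (A B : Finset γ)
    (z : ℝ) (hz : z ∈ Set.Icc (0:ℝ) 1) :
    (∀ E E' : Finset γ, E ⊆ E' → E' ⊆ A ∪ B →
      (fun E : Finset γ => ((E ∩ A).card : ℝ) / A.card +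
        z * (1 - ((E ∩ A).card : ℝ) / A.card) * (((E ∩ B).card : ℝ) / B.card)) E ≤
      (fun E : Finset γ => ((E ∩ A).card : ℝ) / A.card +
        z * (1 - ((E ∩ A).card : ℝ) / A.card) * (((E ∩ B).card : ℝ) / B.card)) E') ∧
    (∀ (E E' : Finset γ) (t : γ), E ⊆ E' → E' ⊆ A ∪ B → t ∈ A ∪ B → t ∉ E' →
      (fun E : Finset γ => ((E ∩ A).card : ℝ) / A.card +
        z * (1 - ((E ∩ A).card : ℝ) / A.card) * (((E ∩ B).card : ℝ) / B.card)) (E' ∪ {t}) -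
      (fun E : Finset γ => ((E ∩ A).card : ℝ) / A.card +
        z * (1 - ((E ∩ A).card : ℝ) / A.card) * (((E ∩ B).card : ℝ) / B.card)) E' ≤
      (fun E : Finset γ => ((E ∩ A).card : ℝ) / A.card +
        z * (1 - ((E ∩ A).card : ℝ) / A.card) * (((E ∩ B).card : ℝ) / B.card)) (E ∪ {t}) -
      (fun E : Finset γ => ((E ∩ A).card : ℝ) / A.card +
        z * (1 - ((E ∩ A).card : ℝ) / A.card) * (((E ∩ B).card : ℝ) / B.card)) E) := by
  refine ⟨fun E E' hE _ => gadgetUtility_mono hz (share_mono A hE) (share_le_one A E)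
    (share_mono B hE) (share_le_one B E'), ?_⟩
  intro E E' t hE _ _ htE'
  have htE : t ∉ E := fun h => htE' (hE h)
  have key := gadgetUtility_increment_antitone hz.1 (share_mono A hE) (share_mono B hE)
    (share_nonneg A {t}) (share_nonneg B {t})
  rw [← share_union_singleton A htE, ← share_union_singleton B htE,
    ← share_union_singleton A htE', ← share_union_singleton B htE'] at key
  exact key

/-- The utility `u(E) = x(E) + z(1−x(E))y(E)` built from disjoint gadgets `A`, `B`
(where `x(E) = |E ∩ A|/|A|` and `y(E) = |E ∩ B|/|B|`) is monotone and submodular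
on subsets of `A ∪ B`. -/
theorem gadget_utility_monotone_submodular
    {γ : Type*} [DecidableEq γ]
    (A B : Finset γ) (hA : A.Nonempty) (hB : B.Nonempty) (hAB : Disjoint A B)
    (z : ℝ) (hz : z ∈ Set.Icc (0:ℝ) 1) :
    (∀ E E' : Finset γ, E ⊆ E' → E' ⊆ A ∪ B →
      (fun E : Finset γ => ((E ∩ A).card : ℝ) / A.card +
        z * (1 - ((E ∩ A).card : ℝ) / A.card) * (((E ∩ B).card : ℝ) / B.card)) E ≤
      (fun E : Finset γ => ((E ∩ A).card : ℝ) / A.card +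
        z * (1 - ((E ∩ A).card : ℝ) / A.card) * (((E ∩ B).card : ℝ) / B.card)) E') ∧
    (∀ (E E' : Finset γ) (t : γ), E ⊆ E' → E' ⊆ A ∪ B → t ∈ A ∪ B → t ∉ E' →
      (fun E : Finset γ => ((E ∩ A).card : ℝ) / A.card +
        z * (1 - ((E ∩ A).card : ℝ) / A.card) * (((E ∩ B).card : ℝ) / B.card)) (E' ∪ {t}) -
      (fun E : Finset γ => ((E ∩ A).card : ℝ) / A.card +
        z * (1 - ((E ∩ A).card : ℝ) / A.card) * (((E ∩ B).card : ℝ) / B.card)) E' ≤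
      (fun E : Finset γ => ((E ∩ A).card : ℝ) / A.card +
        z * (1 - ((E ∩ A).card : ℝ) / A.card) * (((E ∩ B).card : ℝ) / B.card)) (E ∪ {t}) -
      (fun E : Finset γ => ((E ∩ A).card : ℝ) / A.card +
        z * (1 - ((E ∩ A).card : ℝ) / A.card) * (((E ∩ B).card : ℝ) / B.card)) E) :=
  gadget_utility_monotone_submodular_general A B z hz
end
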